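/- For every positive integer r, the mean value M(c*(·,r)²) of the function n ↦ c*(n,r)² exists and equals φ*(r), where φ*(r) = #{k : 1 ≤ k ≤ r and (k,r)_U = 1} is the unitary Euler function (equivalently, φ*(r) = Π_{p^a ∥ r} (p^a − 1), the product over the maximal prime powers p^a exactly dividing r). -/

import Mathlib

/-!
Writing `ζ = exp(2πi/r)`, we have `c*(n,r)² = ∑_{j,k} (ζ^(j+k))^n` over pairs of unitarily
reduced residues `j, k ∈ [1, r]`. The mean value of `n ↦ w^n` for `|w| ≤ 1` is `1` if `w = 1`
and `0` otherwise (the partial sums are bounded geometric sums), so `M(c*(·,r)²)` counts the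
pairs with `r ∣ j + k`. Since `(k,r)_U` only depends on which unitary divisors of `r` divide `k`,
the set of unitarily reduced residues is stable under `k ↦ -k mod r`, so every `j` has exactly
one partner `k`, and the count is `φ*(r)`.
-/

open Finset Filter Topology

/-- The unitary gcd `(n,r)_U`: the largest `d` with `d ∣ n`, `d ∣ r` and `gcd(d, r/d) = 1`. -/
def unitaryGcd (n r : ℕ) : ℕ :=
  (r.divisors.filter (fun d => d ∣ n ∧ Nat.Coprime d (r / d))).sup id

/-- The unitary Ramanujan sum `c*(n,r) = ∑_{1 ≤ k ≤ r, (k,r)_U = 1} exp(2πikn/r)`. -/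
noncomputable def unitaryRamanujanSum (n r : ℕ) : ℂ :=
  ∑ k ∈ (Finset.Icc 1 r).filter (fun k => unitaryGcd k r = 1),
    Complex.exp (2 * Real.pi * Complex.I * k * n / r)

/-- The unitary Euler function `φ*(r) = #{1 ≤ k ≤ r : (k,r)_U = 1}`. -/
def unitaryTotient (r : ℕ) : ℕ :=
  ((Finset.Icc 1 r).filter (fun k => unitaryGcd k r = 1)).card

def HasMeanValue (f : ℕ → ℂ) (a : ℂ) : Prop :=
  Tendsto (fun x : ℝ => (∑ n ∈ Icc 1 ⌊x⌋₊, f n) / (x : ℂ)) atTop (𝓝 a)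

namespace HasMeanValue

theorem sum {ι : Type*} (s : Finset ι) {f : ι → ℕ → ℂ} {a : ι → ℂ}
    (h : ∀ i ∈ s, HasMeanValue (f i) (a i)) :
    HasMeanValue (fun n => ∑ i ∈ s, f i n) (∑ i ∈ s, a i) := by
  refine (tendsto_finsetSum s h).congr fun x => ?_
  rw [← Finset.sum_div, Finset.sum_comm]

end HasMeanValue

theorem hasMeanValue_one : HasMeanValue (fun _ => 1) 1 := by
  have h := (Complex.continuous_ofReal.tendsto 1).comp (tendsto_nat_floor_div_atTop (R := ℝ))
  rw [Complex.ofReal_one] at h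
  exact h.congr fun x => by simp

theorem hasMeanValue_zero_of_norm_sum_le {f : ℕ → ℂ} (C : ℝ)
    (hC : ∀ N, ‖∑ n ∈ Icc 1 N, f n‖ ≤ C) : HasMeanValue f 0 := by
  refine squeeze_zero_norm' (a := fun x => C / x) ?_ (tendsto_const_nhds.div_atTop tendsto_id)
  filter_upwards [eventually_gt_atTop (0 : ℝ)] with x hx
  rw [norm_div, Complex.norm_real, Real.norm_of_nonneg hx.le]
  gcongr
  exact hC _

theorem norm_sum_Icc_pow_le {K : Type*} [NormedField K] {z : K} (hz : ‖z‖ ≤ 1) (hz1 : z ≠ 1)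
    (N : ℕ) : ‖∑ n ∈ Icc 1 N, z ^ n‖ ≤ 2 / ‖z - 1‖ := by
  rw [← Finset.Ico_add_one_right_eq_Icc, geom_sum_Ico hz1 (by omega), norm_div]
  gcongr
  calc ‖z ^ (N + 1) - z ^ 1‖ ≤ ‖z ^ (N + 1)‖ + ‖z ^ 1‖ := norm_sub_le _ _
    _ ≤ 1 + 1 := by
        rw [norm_pow, norm_pow]
        gcongr <;> exact pow_le_one₀ (norm_nonneg z) hz
    _ = 2 := one_add_one_eq_two

theorem hasMeanValue_pow {z : ℂ} (hz : ‖z‖ ≤ 1) :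
    HasMeanValue (z ^ ·) (if z = 1 then 1 else 0) := by
  split_ifs with hz1
  · simpa [hz1] using hasMeanValue_one
  · exact hasMeanValue_zero_of_norm_sum_le _ (norm_sum_Icc_pow_le hz hz1)

def unitaryReducedResidues (r : ℕ) : Finset ℕ :=
  (Icc 1 r).filter (fun k => unitaryGcd k r = 1)

theorem unitaryGcd_congr {a b r : ℕ} (h : ∀ d, d ∣ r → (d ∣ a ↔ d ∣ b)) :
    unitaryGcd a r = unitaryGcd b r := by
  unfold unitaryGcd
  congr 1
  exact Finset.filter_congr fun d hd => by rw [h d (Nat.dvd_of_mem_divisors hd)]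

theorem unitaryGcd_sub_mod_self {r : ℕ} (hr : 0 < r) (j : ℕ) :
    unitaryGcd (r - j % r) r = unitaryGcd j r :=
  unitaryGcd_congr fun _ hd => by
    rw [Nat.dvd_sub_iff_right (Nat.mod_lt j hr).le hd, Nat.dvd_mod_iff hd]

theorem dvd_add_iff_eq_sub_mod {r j k : ℕ} (hj : j ∈ Icc 1 r) (hk : k ∈ Icc 1 r) :
    r ∣ j + k ↔ k = r - j % r := by
  rw [mem_Icc] at hj hk
  obtain hjr | rfl := hj.2.lt_or_eq
  · rw [Nat.mod_eq_of_lt hjr]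
    constructor
    · rintro ⟨c, hc⟩
      have : c < 2 := by nlinarith
      interval_cases c <;> omega
    · intro hk
      exact ⟨1, by omega⟩
  · rw [Nat.mod_self, Nat.sub_zero]
    constructor
    · rintro ⟨c, hc⟩
      have : c < 3 := by nlinarith
      interval_cases c <;> omega
    · rintro rfl
      exact ⟨2, by omega⟩

theorem card_filter_dvd_add_eq_unitaryTotient (r : ℕ) :
    #{p ∈ unitaryReducedResidues r ×ˢ unitaryReducedResidues r | r ∣ p.1 + p.2} =
      unitaryTotient r := by
  have hpairs : {p ∈ unitaryReducedResidues r ×ˢ unitaryReducedResidues r | r ∣ p.1 + p.2} =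
      (unitaryReducedResidues r).image fun j => (j, r - j % r) := by
    ext ⟨j, k⟩
    simp only [unitaryReducedResidues, mem_filter, mem_product, mem_image, Prod.mk.injEq]
    constructor
    · rintro ⟨⟨hj, hk⟩, hdvd⟩
      exact ⟨j, hj, rfl, ((dvd_add_iff_eq_sub_mod hj.1 hk.1).1 hdvd).symm⟩
    · rintro ⟨j, hj, rfl, rfl⟩
      have hr : 0 < r := by have := mem_Icc.1 hj.1; omega
      have hk : r - j % r ∈ Icc 1 r := by
        have := Nat.mod_lt j hr
        rw [mem_Icc]; omega
      exact ⟨⟨hj, hk, by rw [unitaryGcd_sub_mod_self hr, hj.2]⟩,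
        (dvd_add_iff_eq_sub_mod hj.1 hk).2 rfl⟩
  rw [hpairs, card_image_of_injective _ fun a b h => congrArg Prod.fst h]
  rfl

theorem unitaryRamanujanSum_eq_sum_pow (n r : ℕ) :
    unitaryRamanujanSum n r =
      ∑ k ∈ unitaryReducedResidues r, (Complex.exp (2 * Real.pi * Complex.I / r) ^ k) ^ n := by
  refine Finset.sum_congr rfl fun k _ => ?_
  rw [← pow_mul, ← Complex.exp_nat_mul]
  congr 1
  push_cast
  ring

theorem unitaryRamanujanSum_sq (n r : ℕ) :
    unitaryRamanujanSum n r ^ 2 =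
      ∑ p ∈ unitaryReducedResidues r ×ˢ unitaryReducedResidues r,
        (Complex.exp (2 * Real.pi * Complex.I / r) ^ (p.1 + p.2)) ^ n := by
  simp only [unitaryRamanujanSum_eq_sum_pow, sq, sum_mul_sum, sum_product, pow_add, mul_pow]

/-- The mean value of `n ↦ c*(n,r)²` exists and equals `φ*(r)`. -/
theorem unitaryRamanujanSum_sq_meanValue (r : ℕ) (hr : 0 < r) :
    Tendsto
      (fun x : ℝ => (∑ n ∈ Finset.Icc 1 ⌊x⌋₊, (unitaryRamanujanSum n r) ^ 2) / (x : ℂ))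
      atTop (𝓝 ((unitaryTotient r : ℂ))) := by
  have hζ := Complex.isPrimitiveRoot_exp r hr.ne'
  have h := HasMeanValue.sum (unitaryReducedResidues r ×ˢ unitaryReducedResidues r) fun p _ =>
    hasMeanValue_pow (z := _ ^ (p.1 + p.2)) (by rw [norm_pow, hζ.norm'_eq_one hr.ne', one_pow])
  simp only [hζ.pow_eq_one_iff_dvd, sum_boole, card_filter_dvd_add_eq_unitaryTotient,
    ← unitaryRamanujanSum_sq] at h
  exact h
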